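/- Combining the pointwise mixture bound, the oracle decomposition, and Jensen's inequality for min: if per-example fused loss satisfies ℓ_F ≤ (1−α)ℓ_B + α ℓ_D with α = α⋆ (the oracle gate σ-measurable with respect to H) almost surely, and b(H) = E[ℓ_B|H], d(H) = E[ℓ_D|H], then E[ℓ_F] ≤ E[min(b(H), d(H))] ≤ min(E[ℓ_B], E[ℓ_D]). -/

import Mathlib

/-!
The oracle gate follows `ℓ_D` exactly on the set `S = {d < b}` and `ℓ_B` off it, so the
fused loss is dominated by the piecewise loss `S.piecewise ℓ_D ℓ_B`. Because `S` is
measurable for the conditioning σ-algebra, integrating a conditional expectation over `S`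
or over `Sᶜ` is the same as integrating the loss itself; hence the piecewise loss has the
same mean as `S.piecewise d b = min b d`. The second inequality is `min ≤` each argument
together with `E[E[ℓ|H]] = E[ℓ]`.
-/

open MeasureTheory

section

variable {Ω : Type*} {m m0 : MeasurableSpace Ω} {μ : Measure Ω} {f g : Ω → ℝ}

theorem integral_piecewise_condExp (hm : m ≤ m0) [SigmaFinite (μ.trim hm)] {s : Set Ω}
    [DecidablePred (· ∈ s)] (hs : MeasurableSet[m] s) (hf : Integrable f μ)
    (hg : Integrable g μ) :
    ∫ ω, s.piecewise (μ[f | m]) (μ[g | m]) ω ∂μ = ∫ ω, s.piecewise f g ω ∂μ := by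
  rw [integral_piecewise (hm s hs) integrable_condExp.integrableOn
      integrable_condExp.integrableOn,
    integral_piecewise (hm s hs) hf.integrableOn hg.integrableOn,
    setIntegral_condExp hm hf hs, setIntegral_condExp hm hg hs.compl]

theorem min_eq_piecewise_lt (x y : Ω → ℝ) :
    (fun ω => min (x ω) (y ω)) = {ω | y ω < x ω}.piecewise y x := by
  funext ω
  simp only [Set.piecewise, Set.mem_ofPred_eq]
  split_ifs with h
  exacts [min_eq_right h.le, min_eq_left (not_lt.mp h)]

theorem integral_min_condExp (hm : m ≤ m0) [SigmaFinite (μ.trim hm)] (hf : Integrable f μ)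
    (hg : Integrable g μ) :
    ∫ ω, min ((μ[f | m]) ω) ((μ[g | m]) ω) ∂μ
      = ∫ ω, {ω | (μ[g | m]) ω < (μ[f | m]) ω}.piecewise g f ω ∂μ := by
  have hs : MeasurableSet[m] {ω | (μ[g | m]) ω < (μ[f | m]) ω} :=
    measurableSet_lt stronglyMeasurable_condExp.measurable
      stronglyMeasurable_condExp.measurable
  rw [min_eq_piecewise_lt, integral_piecewise_condExp hm hs hg hf]

theorem integral_min_le_min_integral (hf : Integrable f μ) (hg : Integrable g μ) :
    ∫ ω, min (f ω) (g ω) ∂μ ≤ min (∫ ω, f ω ∂μ) (∫ ω, g ω ∂μ) :=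
  le_min (integral_mono (hf.inf hg) hf fun _ => min_le_left _ _)
    (integral_mono (hf.inf hg) hg fun _ => min_le_right _ _)

end

theorem gate_mixture_eq_ite {R : Type*} [Ring R] (p : Prop) [Decidable p] (x y : R) :
    (1 - if p then 1 else 0) * x + (if p then 1 else 0) * y = if p then y else x := by
  split_ifs <;> simp

/-- Full conclusion of the fusion theorem: with `b = E[ℓ_B|H]`, `d = E[ℓ_D|H]` the
conditional losses w.r.t. the sub-σ-algebra `m` generated by `H`, oracle gate
`α⋆ = 𝟙{d < b}`, and fused loss satisfying `ℓ_F ≤ (1−α⋆)ℓ_B + α⋆ ℓ_D` a.e., we have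
`E[ℓ_F] ≤ E[min(b, d)] ≤ min(E[ℓ_B], E[ℓ_D])`. -/
theorem entropy_gated_fusion_oracle_bound
    {Ω : Type*} {m m0 : MeasurableSpace Ω} (hm : m ≤ m0)
    (μ : Measure Ω) [IsProbabilityMeasure μ]
    (ℓB ℓD ℓF : Ω → ℝ)
    (hB : Integrable ℓB μ) (hD : Integrable ℓD μ) (hF : Integrable ℓF μ)
    (b d αstar : Ω → ℝ)
    (hb : b = μ[ℓB | m]) (hd : d = μ[ℓD | m])
    (hαstar : ∀ ω, αstar ω = if d ω < b ω then (1 : ℝ) else 0)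
    (hle : ∀ᵐ ω ∂μ, ℓF ω ≤ (1 - αstar ω) * ℓB ω + αstar ω * ℓD ω) :
    (∫ ω, ℓF ω ∂μ ≤ ∫ ω, min (b ω) (d ω) ∂μ) ∧
    (∫ ω, min (b ω) (d ω) ∂μ ≤ min (∫ ω, ℓB ω ∂μ) (∫ ω, ℓD ω ∂μ)) := by
  subst hb hd
  set S := {ω | (μ[ℓD | m]) ω < (μ[ℓB | m]) ω}
  have hS : MeasurableSet S :=
    hm _ (measurableSet_lt stronglyMeasurable_condExp.measurable
      stronglyMeasurable_condExp.measurable)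
  have hle_piecewise : ∀ᵐ ω ∂μ, ℓF ω ≤ S.piecewise ℓD ℓB ω := by
    filter_upwards [hle] with ω hω
    rwa [hαstar, gate_mixture_eq_ite] at hω
  refine ⟨?_, ?_⟩
  · rw [integral_min_condExp hm hB hD]
    exact integral_mono_ae hF (Integrable.piecewise hS hD.integrableOn hB.integrableOn) hle_piecewise
  · calc ∫ ω, min ((μ[ℓB | m]) ω) ((μ[ℓD | m]) ω) ∂μ
        ≤ min (∫ ω, (μ[ℓB | m]) ω ∂μ) (∫ ω, (μ[ℓD | m]) ω ∂μ) :=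
          integral_min_le_min_integral integrable_condExp integrable_condExp
      _ = min (∫ ω, ℓB ω ∂μ) (∫ ω, ℓD ω ∂μ) := by
          rw [integral_condExp hm, integral_condExp hm]
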